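/- arXiv:2310.04230 — 3 statements merged into one kernel-verified Lean document; each statement's English description precedes it below -/
import Mathlib

section
/- Let V be a finite set (of unchecked items), r : V → ℝ with r v ≥ 0 for every v ∈ V, R = Σ_{v ∈ V} r v assumed positive, W a finite set (of attribute values) and val : V → W. Writing S(w) = Σ_{v ∈ V, val v = w} r v, for every w₀ ∈ W the expected certainty gain of querying the attribute is at least the expected certainty gain of querying the single attribute value w₀; that is, Σ_{w ∈ W} (R − S(w)) · (S(w)/R) ≥ (R − S(w₀)) · (S(w₀)/R) + S(w₀) · ((R − S(w₀))/R). (Proposition 1.) -/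
/-- Proposition 1: the expected certainty gain of querying an attribute is at least
the expected certainty gain of querying any single one of its values. -/
theorem stmt_0 {V W : Type*} [Fintype V] [Fintype W] [DecidableEq W]
    (r : V → ℝ) (hr : ∀ v, 0 ≤ r v)
    (val : V → W)
    (R : ℝ) (hR : R = ∑ v, r v) (hRpos : 0 < R)
    (S : W → ℝ) (hS : ∀ w, S w = ∑ v ∈ Finset.univ.filter (fun v => val v = w), r v)
    (w₀ : W) :
    ∑ w, (R - S w) * (S w / R) ≥
      (R - S w₀) * (S w₀ / R) + S w₀ * ((R - S w₀) / R) := by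
  have hSnn : ∀ w, 0 ≤ S w := by
    intro w
    rw [hS w]
    exact Finset.sum_nonneg fun v _ => hr v
  have hsum : ∑ w, S w = R := by
    rw [hR]
    simp only [hS]
    exact Finset.sum_fiberwise _ _ _
  -- sum over w ≠ w₀
  have hmem : w₀ ∈ (Finset.univ : Finset W) := Finset.mem_univ w₀
  have hsplit : S w₀ + ∑ w ∈ Finset.univ.erase w₀, S w = R := by
    rw [← hsum, Finset.add_sum_erase _ _ hmem]
  have hT : ∑ w ∈ Finset.univ.erase w₀, S w = R - S w₀ := by linarith
  have hsq : ∑ w ∈ Finset.univ.erase w₀, S w ^ 2 ≤ (R - S w₀) ^ 2 := by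
    rw [← hT]
    exact Finset.sum_sq_le_sq_sum_of_nonneg fun w _ => hSnn w
  have key : 2 * (S w₀ * (R - S w₀)) ≤ ∑ w, (R - S w) * S w := by
    have expand : ∑ w, (R - S w) * S w = R * R - ∑ w, S w ^ 2 := by
      have : ∀ w, (R - S w) * S w = R * S w - S w ^ 2 := fun w => by ring
      simp_rw [this]
      rw [Finset.sum_sub_distrib, ← Finset.mul_sum, hsum]
    have hsq2 : ∑ w, S w ^ 2 = S w₀ ^ 2 + ∑ w ∈ Finset.univ.erase w₀, S w ^ 2 :=
      (Finset.add_sum_erase _ (fun w => S w ^ 2) hmem).symm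
    nlinarith [hsq]
  have hRne : R ≠ 0 := ne_of_gt hRpos
  have lhs_eq : ∑ w, (R - S w) * (S w / R) = (∑ w, (R - S w) * S w) / R := by
    rw [Finset.sum_div]
    exact Finset.sum_congr rfl fun w _ => by ring
  have rhs_eq : (R - S w₀) * (S w₀ / R) + S w₀ * ((R - S w₀) / R)
      = (2 * (S w₀ * (R - S w₀))) / R := by ring
  rw [ge_iff_le, lhs_eq, rhs_eq]
  gcongr
end

section
/- Let W be a finite set and S : W → ℝ a function with S(w) ≥ 0 for every w ∈ W, and write R = Σ_{w ∈ W} S(w). For w₀ ∈ W, equality R² − Σ_{w ∈ W} S(w)² = 2 · S(w₀) · (R − S(w₀)) holds if and only if at most one element w ∈ W with w ≠ w₀ has S(w) ≠ 0. (Equality case of Proposition 1: querying the attribute and querying the value w₀ give the same expected certainty gain exactly when, apart from w₀, at most one attribute value carries positive score.) -/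
lemma aux_sq_sum {ι : Type*} [DecidableEq ι] (A : Finset ι) (f : ι → ℝ)
    (hf : ∀ i ∈ A, 0 ≤ f i) :
    (∑ i ∈ A, f i) ^ 2 = ∑ i ∈ A, f i ^ 2 ↔
      (A.filter (fun i => f i ≠ 0)).card ≤ 1 := by
  classical
  set B := A.filter (fun i => f i ≠ 0) with hB
  have hsum : ∑ i ∈ A, f i = ∑ i ∈ B, f i := by
    rw [hB, Finset.sum_filter_ne_zero]
  have hsumsq : ∑ i ∈ A, f i ^ 2 = ∑ i ∈ B, f i ^ 2 := by
    rw [hB]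
    rw [Finset.sum_filter_of_ne]
    intro i _ h
    intro h0
    exact h (by rw [h0]; ring)
  rw [hsum, hsumsq]
  constructor
  · intro h
    by_contra hc
    push_neg at hc
    obtain ⟨i, hi, j, hj, hij⟩ := Finset.one_lt_card.mp hc
    have hiA : i ∈ A := Finset.mem_of_mem_filter i hi
    have hjA : j ∈ A := Finset.mem_of_mem_filter j hj
    have hfi : 0 < f i := lt_of_le_of_ne (hf i hiA) (Ne.symm (Finset.mem_filter.mp hi).2)
    have hfj : 0 < f j := lt_of_le_of_ne (hf j hjA) (Ne.symm (Finset.mem_filter.mp hj).2)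
    have hfB : ∀ k ∈ B, 0 ≤ f k := fun k hk => hf k (Finset.mem_of_mem_filter k hk)
    have hlt : ∑ k ∈ B, f k ^ 2 < ∑ k ∈ B, f k * (∑ l ∈ B, f l) := by
      apply Finset.sum_lt_sum
      · intro k hk
        have : f k ≤ ∑ l ∈ B, f l := Finset.single_le_sum hfB hk
        calc f k ^ 2 = f k * f k := sq (f k) ▸ by ring
        _ ≤ f k * ∑ l ∈ B, f l := mul_le_mul_of_nonneg_left this (hfB k hk)
      · refine ⟨i, hi, ?_⟩
        have : f i < ∑ l ∈ B, f l := by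
          have h2 : f i + f j ≤ ∑ l ∈ B, f l := by
            have := Finset.add_sum_erase B f hi
            rw [← this]
            have hj' : j ∈ B.erase i := Finset.mem_erase.mpr ⟨hij.symm, hj⟩
            have : f j ≤ ∑ l ∈ B.erase i, f l :=
              Finset.single_le_sum (fun k hk => hfB k (Finset.mem_of_mem_erase hk)) hj'
            linarith
          linarith
        calc f i ^ 2 = f i * f i := by ring
        _ < f i * ∑ l ∈ B, f l := mul_lt_mul_of_pos_left this hfi
    rw [← Finset.sum_mul] at hlt
    nlinarith [hlt]
  · intro h
    interval_cases hcard : B.card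
    · rw [Finset.card_eq_zero.mp hcard]; simp
    · obtain ⟨a, ha⟩ := Finset.card_eq_one.mp hcard
      rw [ha]; simp

/-- Equality case of Proposition 1: equality holds iff at most one attribute value
other than `w₀` carries nonzero score. -/
theorem stmt_2 {W : Type*} [Fintype W] [DecidableEq W] (S : W → ℝ) (hS : ∀ w, 0 ≤ S w)
    (R : ℝ) (hR : R = ∑ w, S w) (w₀ : W) :
    R ^ 2 - ∑ w, S w ^ 2 = 2 * S w₀ * (R - S w₀) ↔
      (Finset.univ.filter (fun w => w ≠ w₀ ∧ S w ≠ 0)).card ≤ 1 := by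
  classical
  set A := Finset.univ.erase w₀ with hA
  have hRsplit : R = S w₀ + ∑ w ∈ A, S w := by
    rw [hR, hA, ← Finset.add_sum_erase _ _ (Finset.mem_univ w₀)]
  have hSqsplit : ∑ w, S w ^ 2 = S w₀ ^ 2 + ∑ w ∈ A, S w ^ 2 := by
    rw [hA, ← Finset.add_sum_erase _ _ (Finset.mem_univ w₀)]
  have hfilter : Finset.univ.filter (fun w => w ≠ w₀ ∧ S w ≠ 0) =
      A.filter (fun w => S w ≠ 0) := by
    ext w
    simp [hA, Finset.mem_filter, Finset.mem_erase, and_comm]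
  rw [hfilter, ← aux_sq_sum A S (fun i _ => hS i)]
  constructor
  · intro h
    rw [hRsplit, hSqsplit] at h
    nlinarith [h]
  · intro h
    rw [hRsplit, hSqsplit]
    nlinarith [h]
end

section
/- Let W be a finite set and S : W → ℝ a function with S(w) ≥ 0 for every w ∈ W, and write R = Σ_{w ∈ W} S(w); assume R > 0. If some w₀ ∈ W satisfies S(w₀) = R/2 (an ideal partition exists), then the expected certainty gain of querying the attribute satisfies Σ_{w ∈ W} (R − S(w)) · (S(w)/R) ≥ R/2. (Corollary of Propositions 1 and 2.) -/
/-- Corollary of Propositions 1 and 2: if an ideal partition exists, querying the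
attribute has expected certainty gain at least `R/2`. -/
theorem stmt_8 {W : Type*} [Fintype W] (S : W → ℝ) (hS : ∀ w, 0 ≤ S w)
    (R : ℝ) (hR : R = ∑ w, S w) (hRpos : 0 < R)
    (w₀ : W) (h : S w₀ = R / 2) :
    ∑ w, (R - S w) * (S w / R) ≥ R / 2 := by
  classical
  have herase : ∑ w ∈ Finset.univ.erase w₀, S w = R / 2 := by
    have := Finset.add_sum_erase Finset.univ S (Finset.mem_univ w₀)
    rw [← hR] at this
    linarith
  have hsq : ∑ w, S w ^ 2 ≤ R ^ 2 / 2 := by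
    rw [← Finset.add_sum_erase Finset.univ (fun w => S w ^ 2) (Finset.mem_univ w₀)]
    have h1 : ∑ w ∈ Finset.univ.erase w₀, S w ^ 2
        ≤ (∑ w ∈ Finset.univ.erase w₀, S w) ^ 2 :=
      Finset.sum_sq_le_sq_sum_of_nonneg (fun i _ => hS i)
    rw [herase] at h1
    rw [h]
    nlinarith
  have hsum : ∑ w, (R - S w) * (S w / R) = (R * R - ∑ w, S w ^ 2) / R := by
    rw [eq_div_iff hRpos.ne', Finset.sum_mul]
    have he : ∀ w : W, (R - S w) * (S w / R) * R = R * S w - S w ^ 2 := by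
      intro w; field_simp
    simp_rw [he]
    rw [Finset.sum_sub_distrib, ← Finset.mul_sum, ← hR]
  rw [hsum, ge_iff_le, le_div_iff₀ hRpos]
  nlinarith
end
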